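/- arXiv:1908.09821 — 3 statements merged into one kernel-verified Lean document; each statement's English description precedes it below -/
import Mathlib

section
/- Let λ be a weak composition of n, X_λ the associated nilpotent matrix, h a Hessenberg function with h(i) < i for all i, and w ∈ S_n. Then the permutation flag wE_• = (e_{w(1)} | ⋯ | e_{w(n)}) lies in Hess(X_λ, h) if and only if the filled tableau R(w) is h-strict, i.e., ℓ ≤ h(r) whenever ℓ labels the box directly to the left of r in R(w). -/
open Matrix

attribute [local instance] Classical.propDecidable

noncomputable section

/-- Label of the box in row `i` (0-indexed from the top), column `j` (0-indexed) of the base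
filling of the weak composition `lam`: columns filled left to right, each column bottom to top,
labels `1,…,n`. -/
def baseLabel (lam : List ℕ) (i j : ℕ) : ℕ :=
  (∑ i' ∈ Finset.range lam.length, min (lam.getD i' 0) j) +
    ((Finset.Ico i lam.length).filter (fun i' => j < lam.getD i' 0)).card

def IsBox (lam : List ℕ) (i j : ℕ) : Prop :=
  i < lam.length ∧ j < lam.getD i 0

/-- The nilpotent matrix `X_λ = Σ E_{ℓ r}` over pairs where the box labeled `r` is directly right
of the box labeled `ℓ` in the base filling (labels are 1-indexed; matrix indices 0-indexed). -/
def Xlam (n : ℕ) (lam : List ℕ) : Matrix (Fin n) (Fin n) ℂ :=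
  fun ℓ r => if (∃ i j, IsBox lam i (j+1) ∧ baseLabel lam i j = (ℓ : ℕ) + 1 ∧
      baseLabel lam i (j+1) = (r : ℕ) + 1) then 1 else 0

def IsFullFlag (n : ℕ) (V : ℕ → Submodule ℂ (Fin n → ℂ)) : Prop :=
  V 0 = ⊥ ∧ (∀ i, V i ≤ V (i+1)) ∧ ∀ i, i ≤ n → Module.finrank ℂ (V i) = i

def InHess (n : ℕ) (X : Matrix (Fin n) (Fin n) ℂ) (h : ℕ → ℕ)
    (V : ℕ → Submodule ℂ (Fin n → ℂ)) : Prop :=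
  ∀ i, i ≤ n → ∀ v ∈ V i, X.mulVec v ∈ V (h i)

/-- The flag `wE_•`, whose `k`-th space is spanned by `e_{w(1)},…,e_{w(k)}` (0-indexed). -/
def permFlag (n : ℕ) (w : Equiv.Perm (Fin n)) : ℕ → Submodule ℂ (Fin n → ℂ) :=
  fun k => Submodule.span ℂ {v | ∃ j : Fin n, (j : ℕ) < k ∧ v = Pi.single (w j) (1 : ℂ)}

/-- The flag whose `k`-th space is spanned by the first `k` columns of `g`. -/
def matFlag (n : ℕ) (g : Matrix (Fin n) (Fin n) ℂ) : ℕ → Submodule ℂ (Fin n → ℂ) :=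
  fun k => Submodule.span ℂ {c | ∃ j : Fin n, (j : ℕ) < k ∧ c = fun a => g a j}

def permMat (n : ℕ) (σ : Equiv.Perm (Fin n)) : Matrix (Fin n) (Fin n) ℂ :=
  fun a b => if σ b = a then 1 else 0

def invSet (n : ℕ) (w : Equiv.Perm (Fin n)) : Finset (Fin n × Fin n) :=
  Finset.univ.filter (fun p => p.2 < p.1 ∧ w p.1 < w p.2)

def blen (n : ℕ) (w : Equiv.Perm (Fin n)) : ℕ := (invSet n w).card

open Fin.NatCast in
/-- `v = s_i s_{i+1} ⋯ s_{n-1}` (0-indexed simple transpositions `swap j (j+1)`). -/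
def vPerm (n : ℕ) (i : ℕ) : Equiv.Perm (Fin (n+1)) :=
  ((List.Ico i n).map (fun j : ℕ => Equiv.swap (j : Fin (n+1)) ((j+1 : ℕ) : Fin (n+1)))).prod

/-- `R(w)` is row-strict: the entry in the box labeled `m` of the base filling is `w⁻¹(m)`,
so entry `p` (0-indexed) occupies the box whose base label is `w(p)+1`. -/
def RowStrictT (n : ℕ) (lam : List ℕ) (w : Equiv.Perm (Fin n)) : Prop :=
  ∀ i j, IsBox lam i (j+1) → ∀ p q : Fin n,
    (w p : ℕ) + 1 = baseLabel lam i j → (w q : ℕ) + 1 = baseLabel lam i (j+1) → p < q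

def HStrictT (n : ℕ) (lam : List ℕ) (h : ℕ → ℕ) (w : Equiv.Perm (Fin n)) : Prop :=
  ∀ i j, IsBox lam i (j+1) → ∀ p q : Fin n,
    (w p : ℕ) + 1 = baseLabel lam i j → (w q : ℕ) + 1 = baseLabel lam i (j+1) →
      (p : ℕ) + 1 ≤ h ((q : ℕ) + 1)

/-- `(k,ℓ)` is a Hessenberg inversion of `R(w)` (entries 0-indexed: values are index+1). -/
def HessInvT (n : ℕ) (lam : List ℕ) (h : ℕ → ℕ) (w : Equiv.Perm (Fin n)) (k ℓ : Fin n) : Prop :=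
  ℓ < k ∧ ∃ ik jk il jl : ℕ, IsBox lam ik jk ∧ IsBox lam il jl ∧
    baseLabel lam ik jk = (w k : ℕ) + 1 ∧ baseLabel lam il jl = (w ℓ : ℕ) + 1 ∧
    (jk < jl ∨ (jk = jl ∧ il < ik)) ∧
    (∀ r : Fin n, IsBox lam il (jl + 1) → (w r : ℕ) + 1 = baseLabel lam il (jl + 1) →
      (k : ℕ) + 1 ≤ h ((r : ℕ) + 1))

/-- Springer inversions: Hessenberg inversions for `h = (0,1,…,n-1)`, i.e. `h(i) = i - 1`. -/
def SpringerInvT (n : ℕ) (lam : List ℕ) (w : Equiv.Perm (Fin n)) (k ℓ : Fin n) : Prop :=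
  HessInvT n lam (fun m => m - 1) w k ℓ

/-- The box labeled `b+1` is directly right of the box labeled `a+1` in the base filling. -/
def RightNbr (lam : List ℕ) (a b : ℕ) : Prop :=
  ∃ i j, IsBox lam i (j+1) ∧ baseLabel lam i j = a + 1 ∧ baseLabel lam i (j+1) = b + 1

/-- The box labeled `a+1` is at the end of its row in the base filling. -/
def EndOfRow (lam : List ℕ) (a : ℕ) : Prop :=
  ∃ i j, IsBox lam i j ∧ ¬ IsBox lam i (j+1) ∧ baseLabel lam i j = a + 1

def IsUpperUnip (n : ℕ) (g : Matrix (Fin n) (Fin n) ℂ) : Prop :=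
  (∀ i, g i i = 1) ∧ ∀ i j : Fin n, j < i → g i j = 0

/-- `U_i`: upper unipotent matrices whose off-diagonal entries are supported in row `i`. -/
def InUi (n : ℕ) (i : Fin n) (g : Matrix (Fin n) (Fin n) ℂ) : Prop :=
  IsUpperUnip n g ∧ ∀ a b : Fin n, a ≠ b → g a b ≠ 0 → a = i

/-- `U_0`: upper unipotent matrices of `GL_n` embedded in `GL_{n+1}` (last column trivial). -/
def InU0 (n : ℕ) (g : Matrix (Fin (n+1)) (Fin (n+1)) ℂ) : Prop :=
  IsUpperUnip (n+1) g ∧ ∀ a : Fin (n+1), a ≠ Fin.last n → g a (Fin.last n) = 0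

/-- The element of `B_k(w)` with coordinates `x`: it sends `e_{w(j)} = X_λ^m e_{w(ℓ)}` to
`e_{w(j)} + x ℓ • X_λ^m e_{w(k)}` for Springer inversions `(k,ℓ)`, fixing all other `e_{w(j)}`. -/
def BkMat (n : ℕ) (lam : List ℕ) (w : Equiv.Perm (Fin n)) (k : Fin n) (x : Fin n → ℂ) :
    Matrix (Fin n) (Fin n) ℂ :=
  1 + ∑ ℓ : Fin n, if SpringerInvT n lam w k ℓ then
      x ℓ • (∑ m ∈ Finset.range n,
        (Xlam n lam) ^ m * Matrix.single (w k) (w ℓ) (1 : ℂ) * ((Xlam n lam)ᵀ) ^ m)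
    else 0

/-- The product `g_n g_{n-1} ⋯ g_2` of elements `g_k ∈ B_k(w)` with coordinates `x k`. -/
def bigB (n : ℕ) (lam : List ℕ) (w : Equiv.Perm (Fin n)) (x : Fin n → Fin n → ℂ) :
    Matrix (Fin n) (Fin n) ℂ :=
  ((List.ofFn (fun k : Fin n => BkMat n lam w k (x k))).reverse).prod

/- Abstract fillings `T : row → column → value` of the diagram of `lam`, values in `[1, n]`. -/

def RowStrictF (lam : List ℕ) (T : ℕ → ℕ → ℕ) : Prop :=
  ∀ i j, IsBox lam i (j+1) → T i j < T i (j+1)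

def HStrictF (lam : List ℕ) (h : ℕ → ℕ) (T : ℕ → ℕ → ℕ) : Prop :=
  ∀ i j, IsBox lam i (j+1) → T i j ≤ h (T i (j+1))

def GoodFilling (lam : List ℕ) (T : ℕ → ℕ → ℕ) : Prop :=
  (∀ i j, IsBox lam i j → 1 ≤ T i j ∧ T i j ≤ lam.sum) ∧
  (∀ m, 1 ≤ m → m ≤ lam.sum → ∃ i j, IsBox lam i j ∧ T i j = m) ∧
  (∀ i j i' j', IsBox lam i j → IsBox lam i' j' → T i j = T i' j' → i = i' ∧ j = j')

def HessInvF (lam : List ℕ) (h : ℕ → ℕ) (T : ℕ → ℕ → ℕ) (k ℓ : ℕ) : Prop :=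
  ℓ < k ∧ ∃ ik jk il jl : ℕ, IsBox lam ik jk ∧ IsBox lam il jl ∧
    T ik jk = k ∧ T il jl = ℓ ∧
    (jk < jl ∨ (jk = jl ∧ il < ik)) ∧
    (IsBox lam il (jl + 1) → k ≤ h (T il (jl + 1)))

/-- `S` is obtained from `T` by sorting each column increasingly from top to bottom:
same column entries (as sets, entries being distinct), with columns of `S` increasing. -/
def ColSortedOf (lam : List ℕ) (T S : ℕ → ℕ → ℕ) : Prop :=
  (∀ j m, (∃ i, IsBox lam i j ∧ T i j = m) ↔ (∃ i, IsBox lam i j ∧ S i j = m)) ∧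
  (∀ i j, IsBox lam i j → IsBox lam (i+1) j → S i j < S (i+1) j)

def IsPartitionL (lam : List ℕ) : Prop :=
  ∀ i i', i ≤ i' → lam.getD i' 0 ≤ lam.getD i 0

def hessInvCount (lam : List ℕ) (h : ℕ → ℕ) (T : ℕ → ℕ → ℕ) : ℕ :=
  (((Finset.range (lam.sum + 1)) ×ˢ (Finset.range (lam.sum + 1))).filter
    (fun p => HessInvF lam h T p.1 p.2)).card

def Hspace (n : ℕ) (h : ℕ → ℕ) : Submodule ℂ (Matrix (Fin n) (Fin n) ℂ) :=
  Submodule.span ℂ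
    {A | ∃ i j : Fin n, (i : ℕ) + 1 ≤ h ((j : ℕ) + 1) ∧ A = Matrix.single i j (1 : ℂ)}

/-- Left-nested iterated bracket `[f (m), [f (m-1), [⋯ [f 1, f 0]]]]`. -/
def iterBr (n : ℕ) (f : ℕ → Matrix (Fin n) (Fin n) ℂ) : ℕ → Matrix (Fin n) (Fin n) ℂ
  | 0 => f 0
  | (m+1) => f (m+1) * iterBr n f m - iterBr n f m * f (m+1)

/-! `wE_k` is the coordinate subspace on `e_{w(0)}, …, e_{w(k-1)}`, so `X_λ(wE_i) ⊆ wE_{h(i)}` says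
exactly that `X_λ[w p, w q] ≠ 0` with `q < i` forces `p < h(i)`. Since `h` is monotone, the binding
case is `i = q + 1`, and `X_λ[w p, w q] ≠ 0` means that `p` is directly left of `q` in `R(w)`. -/

theorem Xlam_apply_ne_zero_iff {n : ℕ} {lam : List ℕ} {a b : Fin n} :
    Xlam n lam a b ≠ 0 ↔ RightNbr lam a b := by
  unfold Xlam RightNbr
  split_ifs with hab <;> simp [hab]

theorem hStrictT_iff_forall_rightNbr {n : ℕ} {lam : List ℕ} {h : ℕ → ℕ} {w : Equiv.Perm (Fin n)} :
    HStrictT n lam h w ↔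
      ∀ p q : Fin n, RightNbr lam (w p) (w q) → (p : ℕ) + 1 ≤ h ((q : ℕ) + 1) := by
  constructor
  · rintro hS p q ⟨i, j, hbox, hp, hq⟩
    exact hS i j hbox p q hp.symm hq.symm
  · intro hS i j hbox p q hp hq
    exact hS p q ⟨i, j, hbox, hp.symm, hq.symm⟩

theorem mem_permFlag_iff {n k : ℕ} {w : Equiv.Perm (Fin n)} {v : Fin n → ℂ} :
    v ∈ permFlag n w k ↔ ∀ p : Fin n, k ≤ p → v (w p) = 0 := by
  constructor
  · intro hv
    induction hv using Submodule.span_induction with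
    | mem x hx =>
      obtain ⟨j, hj, rfl⟩ := hx
      intro p hp
      exact Pi.single_eq_of_ne (w.injective.ne (by omega)) 1
    | zero => simp
    | add x y _ _ hx hy => intro p hp; simp [hx p hp, hy p hp]
    | smul c x _ hx => intro p hp; simp [hx p hp]
  · intro hv
    rw [← Finset.univ_sum_single v, ← Equiv.sum_comp w]
    refine Submodule.sum_mem _ fun p _ => ?_
    by_cases hp : (p : ℕ) < k
    · rw [← mul_one (v (w p)), ← smul_eq_mul, Pi.single_smul']
      exact Submodule.smul_mem _ _ (Submodule.subset_span ⟨p, hp, rfl⟩)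
    · simp [hv p (not_lt.1 hp)]

theorem inHess_permFlag_iff {n : ℕ} {X : Matrix (Fin n) (Fin n) ℂ} {h : ℕ → ℕ}
    {w : Equiv.Perm (Fin n)} :
    InHess n X h (permFlag n w) ↔
      ∀ i ≤ n, ∀ p q : Fin n, (q : ℕ) < i → h i ≤ p → X (w p) (w q) = 0 := by
  have hcol : ∀ i q, X *ᵥ Pi.single (w q) 1 ∈ permFlag n w (h i) ↔
      ∀ p : Fin n, h i ≤ p → X (w p) (w q) = 0 := fun i q => by
    simp [mem_permFlag_iff]
  constructor
  · intro hH i hi p q hq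
    exact (hcol i q).1 (hH i hi _ (Submodule.subset_span ⟨q, hq, rfl⟩)) p
  · intro hX i hi v hv
    suffices permFlag n w i ≤ (permFlag n w (h i)).comap X.mulVecLin from this hv
    refine Submodule.span_le.2 ?_
    rintro _ ⟨q, hq, rfl⟩
    exact (hcol i q).2 fun p => hX i hi p q hq

theorem stmt6_general (n : ℕ) (lam : List ℕ) (h : ℕ → ℕ)
    (hmono : ∀ i, 1 ≤ i → i < n → h i ≤ h (i+1))
    (w : Equiv.Perm (Fin n)) :
    InHess n (Xlam n lam) h (permFlag n w) ↔ HStrictT n lam h w := by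
  have hmonoOn : MonotoneOn h (Set.Icc 1 n) :=
    monotoneOn_of_le_add_one Set.ordConnected_Icc fun i _ hi hi' => hmono i hi.1 hi'.2
  rw [inHess_permFlag_iff, hStrictT_iff_forall_rightNbr]
  constructor
  · intro hH p q hpq
    by_contra hp
    exact Xlam_apply_ne_zero_iff.2 hpq (hH ((q : ℕ) + 1) q.isLt p q (lt_add_one _) (by omega))
  · intro hS i hi p q hqi hip
    by_contra hpq
    have hle : h ((q : ℕ) + 1) ≤ h i :=
      hmonoOn ⟨by omega, by omega⟩ ⟨by omega, hi⟩ (by omega)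
    have := hS p q (Xlam_apply_ne_zero_iff.1 hpq)
    omega

/-- the permutation flag `wE_•` lies in `Hess(X_λ, h)` iff `R(w)` is `h`-strict. -/
theorem stmt6 (n : ℕ) (lam : List ℕ) (hn : lam.sum = n) (h : ℕ → ℕ)
    (hmono : ∀ i, 1 ≤ i → i < n → h i ≤ h (i+1))
    (hlt : ∀ i, 1 ≤ i → i ≤ n → h i < i)
    (w : Equiv.Perm (Fin n)) :
    InHess n (Xlam n lam) h (permFlag n w) ↔ HStrictT n lam h w :=
  stmt6_general n lam h hmono w
end
end

section
/- Let λ be a weak composition of n, h a Hessenberg function with h(i) < i, w ∈ S_n, and fix k ∈ [n]. If (k,ℓ₁) and (k,ℓ₂) are two distinct Hessenberg inversions of R(w), then k, ℓ₁, ℓ₂ all lie in pairwise distinct rows of R(w). -/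
open Matrix

attribute [local instance] Classical.propDecidable

noncomputable section

/-
Reading the base filling column by column, each column bottom to top, the label of a box is the
number of boxes in earlier columns plus its height in its own column; so labels identify boxes and
every box of `R(w)` carries an entry. If `k` shared a row with `ℓ`, it would lie strictly left of
`ℓ` and row-strictness would give `k < ℓ`. If `ℓ₁` lies left of `ℓ₂` in one row and `r` is the
entry right of `ℓ₁`, then `r ≤ ℓ₂`, so `k ≤ h(r) ≤ h(ℓ₂) < ℓ₂`, contradicting `ℓ₂ < k`.
-/

open Finset

def colOffset (lam : List ℕ) (j : ℕ) : ℕ :=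
  ∑ i ∈ range lam.length, min (lam.getD i 0) j

lemma baseLabel_eq_colOffset_add (lam : List ℕ) (i j : ℕ) :
    baseLabel lam i j = colOffset lam j + #{i' ∈ Ico i lam.length | j < lam.getD i' 0} :=
  rfl

lemma colOffset_succ (lam : List ℕ) (j : ℕ) :
    colOffset lam (j + 1) = colOffset lam j + #{i ∈ range lam.length | j < lam.getD i 0} := by
  rw [colOffset, colOffset, card_filter, ← sum_add_distrib]
  refine sum_congr rfl fun i _ => ?_
  split <;> omega

lemma colOffset_mono (lam : List ℕ) : Monotone (colOffset lam) :=
  fun _ _ hj => sum_le_sum fun _ _ => min_le_min le_rfl hj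

lemma sum_range_length_getD (lam : List ℕ) :
    ∑ i ∈ range lam.length, lam.getD i 0 = lam.sum := by
  induction lam with
  | nil => simp
  | cons a l ih =>
    rw [List.length_cons, sum_range_succ', List.sum_cons, ← ih]
    simp only [List.getD_cons_succ, List.getD_cons_zero]
    omega

lemma colOffset_le_sum (lam : List ℕ) (j : ℕ) : colOffset lam j ≤ lam.sum :=
  sum_range_length_getD lam ▸ sum_le_sum fun _ _ => min_le_left _ _

lemma colOffset_lt_baseLabel {lam : List ℕ} {i j : ℕ} (hb : IsBox lam i j) :
    colOffset lam j < baseLabel lam i j := by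
  have : 0 < #{i' ∈ Ico i lam.length | j < lam.getD i' 0} :=
    card_pos.mpr ⟨i, mem_filter.mpr ⟨mem_Ico.mpr ⟨le_rfl, hb.1⟩, hb.2⟩⟩
  rw [baseLabel_eq_colOffset_add]
  omega

lemma baseLabel_le_colOffset_succ (lam : List ℕ) (i j : ℕ) :
    baseLabel lam i j ≤ colOffset lam (j + 1) := by
  have : #{i' ∈ Ico i lam.length | j < lam.getD i' 0} ≤
      #{i' ∈ range lam.length | j < lam.getD i' 0} :=
    card_le_card <| filter_subset_filter _ <| by
      rw [range_eq_Ico]; exact Ico_subset_Ico (Nat.zero_le i) le_rfl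
  rw [baseLabel_eq_colOffset_add, colOffset_succ]
  omega

lemma one_le_baseLabel {lam : List ℕ} {i j : ℕ} (hb : IsBox lam i j) :
    1 ≤ baseLabel lam i j :=
  Nat.one_le_of_lt (colOffset_lt_baseLabel hb)

lemma baseLabel_le_sum (lam : List ℕ) (i j : ℕ) : baseLabel lam i j ≤ lam.sum :=
  (baseLabel_le_colOffset_succ lam i j).trans (colOffset_le_sum lam _)

lemma baseLabel_lt_of_col_lt {lam : List ℕ} {i j i' j' : ℕ} (hb' : IsBox lam i' j')
    (hj : j < j') : baseLabel lam i j < baseLabel lam i' j' :=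
  calc baseLabel lam i j ≤ colOffset lam (j + 1) := baseLabel_le_colOffset_succ lam i j
    _ ≤ colOffset lam j' := colOffset_mono lam hj
    _ < baseLabel lam i' j' := colOffset_lt_baseLabel hb'

lemma baseLabel_lt_of_row_lt {lam : List ℕ} {i i' j : ℕ} (hb : IsBox lam i j) (hi : i < i') :
    baseLabel lam i' j < baseLabel lam i j := by
  rw [baseLabel_eq_colOffset_add, baseLabel_eq_colOffset_add, Nat.add_lt_add_iff_left]
  refine card_lt_card ⟨filter_subset_filter _ (Ico_subset_Ico hi.le le_rfl), fun hsub => ?_⟩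
  have := hsub (mem_filter.mpr ⟨mem_Ico.mpr ⟨le_rfl, hb.1⟩, hb.2⟩)
  simp only [mem_filter, mem_Ico] at this
  omega

lemma eq_of_baseLabel_eq {lam : List ℕ} {i j i' j' : ℕ} (hb : IsBox lam i j)
    (hb' : IsBox lam i' j') (he : baseLabel lam i j = baseLabel lam i' j') : i = i' ∧ j = j' := by
  obtain rfl : j = j' := by
    by_contra hj
    rcases Nat.lt_or_gt_of_ne hj with hj | hj
    · exact (baseLabel_lt_of_col_lt hb' hj).ne he
    · exact (baseLabel_lt_of_col_lt hb hj).ne' he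
  refine ⟨?_, rfl⟩
  by_contra hi
  rcases Nat.lt_or_gt_of_ne hi with hi | hi
  · exact (baseLabel_lt_of_row_lt hb hi).ne' he
  · exact (baseLabel_lt_of_row_lt hb' hi).ne he

lemma exists_entry_of_isBox {n : ℕ} {lam : List ℕ} (hn : lam.sum = n) (w : Equiv.Perm (Fin n))
    {i j : ℕ} (hb : IsBox lam i j) : ∃ p : Fin n, baseLabel lam i j = (w p : ℕ) + 1 := by
  have h1 := one_le_baseLabel hb
  have h2 := baseLabel_le_sum lam i j
  refine ⟨w.symm ⟨baseLabel lam i j - 1, by omega⟩, ?_⟩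
  simp only [Equiv.apply_symm_apply]
  omega

section

variable {n : ℕ} {lam : List ℕ} {h : ℕ → ℕ} {w : Equiv.Perm (Fin n)} {k ℓ : Fin n}

lemma RowStrictT.lt_of_col_lt (hrs : RowStrictT n lam w) (hn : lam.sum = n) {i j j' : ℕ}
    (hb' : IsBox lam i j') (hj : j < j') {p q : Fin n}
    (hp : baseLabel lam i j = (w p : ℕ) + 1) (hq : baseLabel lam i j' = (w q : ℕ) + 1) :
    p < q := by
  induction j', hj using Nat.le_induction generalizing q with
  | base => exact hrs i j hb' p q hp.symm hq.symm
  | succ m _ ih =>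
    have hbm : IsBox lam i m := ⟨hb'.1, by have := hb'.2; omega⟩
    obtain ⟨r, hr⟩ := exists_entry_of_isBox hn w hbm
    exact (ih hbm hr).trans (hrs i m hb' r q hr.symm hq.symm)

lemma HessInvT.of_isBox (hinv : HessInvT n lam h w k ℓ) {ik jk il jl : ℕ}
    (hbk : IsBox lam ik jk) (hbl : IsBox lam il jl)
    (hk : baseLabel lam ik jk = (w k : ℕ) + 1) (hl : baseLabel lam il jl = (w ℓ : ℕ) + 1) :
    (jk < jl ∨ (jk = jl ∧ il < ik)) ∧
      ∀ r : Fin n, IsBox lam il (jl + 1) → (w r : ℕ) + 1 = baseLabel lam il (jl + 1) →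
        (k : ℕ) + 1 ≤ h ((r : ℕ) + 1) := by
  obtain ⟨-, ik', jk', il', jl', hbk', hbl', hk', hl', hpos, hcond⟩ := hinv
  obtain ⟨rfl, rfl⟩ := eq_of_baseLabel_eq hbk hbk' (hk.trans hk'.symm)
  obtain ⟨rfl, rfl⟩ := eq_of_baseLabel_eq hbl hbl' (hl.trans hl'.symm)
  exact ⟨hpos, hcond⟩

lemma HessInvT.row_ne (hinv : HessInvT n lam h w k ℓ) (hrs : RowStrictT n lam w)
    (hn : lam.sum = n) {ik jk il jl : ℕ} (hbk : IsBox lam ik jk) (hbl : IsBox lam il jl)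
    (hk : baseLabel lam ik jk = (w k : ℕ) + 1) (hl : baseLabel lam il jl = (w ℓ : ℕ) + 1) :
    ik ≠ il := by
  rintro rfl
  rcases (hinv.of_isBox hbk hbl hk hl).1 with hj | ⟨-, hi⟩
  · exact (hinv.1.trans (hrs.lt_of_col_lt hn hbl hj hk hl)).false
  · exact hi.false

lemma HessInvT.lt_of_right_in_row (hinv : HessInvT n lam h w k ℓ) (hrs : RowStrictT n lam w)
    (hn : lam.sum = n) (hmono : ∀ i, 1 ≤ i → i < n → h i ≤ h (i + 1))
    (hlt : ∀ i, 1 ≤ i → i ≤ n → h i < i) {ik jk i jl j : ℕ}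
    (hbk : IsBox lam ik jk) (hbl : IsBox lam i jl)
    (hk : baseLabel lam ik jk = (w k : ℕ) + 1) (hl : baseLabel lam i jl = (w ℓ : ℕ) + 1)
    (hj : jl < j) (hb : IsBox lam i j) {q : Fin n} (hq : baseLabel lam i j = (w q : ℕ) + 1) :
    k < q := by
  have hmonoOn : MonotoneOn h (Set.Icc 1 n) :=
    monotoneOn_of_le_succ Set.ordConnected_Icc fun a _ ha hsa => by
      simp only [Order.succ_eq_add_one, Set.mem_Icc] at ha hsa
      exact hmono a ha.1 (by omega)
  have hbr : IsBox lam i (jl + 1) := ⟨hb.1, by have := hb.2; omega⟩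
  obtain ⟨r, hr⟩ := exists_entry_of_isBox hn w hbr
  have hrq : r ≤ q := by
    rcases Nat.lt_or_eq_of_le (hj : jl + 1 ≤ j) with hj' | rfl
    · exact (hrs.lt_of_col_lt hn hb hj' hr hq).le
    · exact (w.injective (Fin.ext (Nat.add_right_cancel (hr.symm.trans hq)))).le
  have hq_lt := q.isLt
  suffices (k : ℕ) + 1 < (q : ℕ) + 1 by omega
  calc (k : ℕ) + 1 ≤ h ((r : ℕ) + 1) := (hinv.of_isBox hbk hbl hk hl).2 r hbr hr.symm
    _ ≤ h ((q : ℕ) + 1) := hmonoOn ⟨by omega, by omega⟩ ⟨by omega, by omega⟩ (by omega)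
    _ < (q : ℕ) + 1 := hlt _ (by omega) (by omega)

end

theorem stmt8_general (n : ℕ) (lam : List ℕ) (hn : lam.sum = n) (h : ℕ → ℕ)
    (hmono : ∀ i, 1 ≤ i → i < n → h i ≤ h (i+1))
    (hlt : ∀ i, 1 ≤ i → i ≤ n → h i < i)
    (w : Equiv.Perm (Fin n))
    (hrs : RowStrictT n lam w)
    (k l1 l2 : Fin n) (hne : l1 ≠ l2)
    (h1 : HessInvT n lam h w k l1) (h2 : HessInvT n lam h w k l2) :
    ∀ ik jk i1 j1 i2 j2 : ℕ,
      IsBox lam ik jk → IsBox lam i1 j1 → IsBox lam i2 j2 →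
      baseLabel lam ik jk = (w k : ℕ) + 1 →
      baseLabel lam i1 j1 = (w l1 : ℕ) + 1 →
      baseLabel lam i2 j2 = (w l2 : ℕ) + 1 →
      ik ≠ i1 ∧ ik ≠ i2 ∧ i1 ≠ i2 := by
  intro ik jk i1 j1 i2 j2 hbk hb1 hb2 hk hl1 hl2
  refine ⟨h1.row_ne hrs hn hbk hb1 hk hl1, h2.row_ne hrs hn hbk hb2 hk hl2, ?_⟩
  rintro rfl
  have hj : j1 ≠ j2 := by
    rintro rfl
    exact hne (w.injective (Fin.ext (by omega)))
  rcases Nat.lt_or_gt_of_ne hj with hj | hj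
  · exact (h2.1.trans (h1.lt_of_right_in_row hrs hn hmono hlt hbk hb1 hk hl1 hj hb2 hl2)).false
  · exact (h1.1.trans (h2.lt_of_right_in_row hrs hn hmono hlt hbk hb2 hk hl2 hj hb1 hl1)).false

/-- if `(k,ℓ₁)` and `(k,ℓ₂)` are distinct Hessenberg inversions of `R(w)`, then
`k`, `ℓ₁`, `ℓ₂` lie in pairwise distinct rows of `R(w)`. -/
theorem stmt8 (n : ℕ) (lam : List ℕ) (hn : lam.sum = n) (h : ℕ → ℕ)
    (hmono : ∀ i, 1 ≤ i → i < n → h i ≤ h (i+1))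
    (hlt : ∀ i, 1 ≤ i → i ≤ n → h i < i)
    (w : Equiv.Perm (Fin n))
    (hrs : RowStrictT n lam w) (hhs : HStrictT n lam h w)
    (k l1 l2 : Fin n) (hne : l1 ≠ l2)
    (h1 : HessInvT n lam h w k l1) (h2 : HessInvT n lam h w k l2) :
    ∀ ik jk i1 j1 i2 j2 : ℕ,
      IsBox lam ik jk → IsBox lam i1 j1 → IsBox lam i2 j2 →
      baseLabel lam ik jk = (w k : ℕ) + 1 →
      baseLabel lam i1 j1 = (w l1 : ℕ) + 1 →
      baseLabel lam i2 j2 = (w l2 : ℕ) + 1 →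
      ik ≠ i1 ∧ ik ≠ i2 ∧ i1 ≠ i2 :=
  stmt8_general n lam hn h hmono hlt w hrs k l1 l2 hne h1 h2
end
end

section
/- Let λ be a weak composition of n, w ∈ S_n with R(w) row-strict, 2 ≤ k ≤ n, and g_k ∈ B_k(w) with coordinates x_{w(k)w(ℓ)}. Then the commutator g_k X_λ − X_λ g_k applied to e_{w(j)} equals x_{w(k)w(ℓ)} e_{w(k)} if j = r_ℓ for some (k,ℓ) ∈ inv_λ^k(w) (where r_ℓ labels the box directly right of ℓ in R(w)), and equals 0 otherwise. In particular, when k = n, g_n commutes with X_λ. -/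
open Matrix

attribute [local instance] Classical.propDecidable

noncomputable section

/-!
`X_λ` shifts every basis vector `e_b` one box to the left along its row of the base filling
(to `0` in the first column), and `X_λᵀ` shifts one box to the right. The block of `g_k` belonging
to the inversion `(k, ℓ)` is `S = ∑ₘ X_λᵐ E_{pq} (X_λᵀ)ᵐ = ∑ₘ (X_λᵐ e_p)(X_λᵐ e_q)ᵀ` with
`p = w(k)`, `q = w(ℓ)`. Telescoping, `S X_λ - X_λ S` is `E_{pq} X_λ` plus terms
`(X_λᵐ⁺¹ e_p)((X_λᵀ X_λᵐ⁺¹ - X_λᵐ) e_q)ᵀ`; these vanish because the column of `p` is at most that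
of `q`: while `m` is less than the column of `q`, `X_λᵀ` undoes the last of the `m + 1` left
shifts of `e_q`, and otherwise `X_λᵐ⁺¹ e_p = 0`. Hence `[g_k, X_λ] = ∑ x_ℓ E_{w(k) w(ℓ)} X_λ`, and `E_{w(k) w(ℓ)} X_λ`
sends `e_{w(j)}` to `e_{w(k)}` exactly when `j` is directly right of `ℓ`. If `k = n`, the
Springer condition `k < r` on the right neighbour `r` of `ℓ` leaves no room for `r`.
-/

open Finset

section CommutatorIdentity

variable {ι R : Type*} [Fintype ι] [DecidableEq ι] [CommRing R]

theorem Matrix.sum_vecMulVec_pow_commutator (X : Matrix ι ι R) (u v : ι → R) (N : ℕ) :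
    (∑ m ∈ range (N + 1), vecMulVec (X ^ m *ᵥ u) (X ^ m *ᵥ v)) * X -
        X * ∑ m ∈ range (N + 1), vecMulVec (X ^ m *ᵥ u) (X ^ m *ᵥ v) =
      vecMulVec u (Xᵀ *ᵥ v) +
          ∑ m ∈ range N,
            vecMulVec (X ^ (m + 1) *ᵥ u) (Xᵀ *ᵥ (X ^ (m + 1) *ᵥ v) - X ^ m *ᵥ v) -
        vecMulVec (X ^ (N + 1) *ᵥ u) (X ^ N *ᵥ v) := by
  induction N with
  | zero => simp [vecMulVec_mul, mul_vecMulVec, mulVec_transpose]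
  | succ N ih =>
    rw [sum_range_succ, add_mul, mul_add, add_sub_add_comm, ih, sum_range_succ]
    simp only [vecMulVec_mul, mul_vecMulVec, mulVec_transpose, vecMulVec_sub, ← mulVec_mulVec,
      pow_succ']
    abel

theorem Matrix.sum_vecMulVec_pow_commutator_eq (X : Matrix ι ι R) (u v : ι → R) (N : ℕ)
    (h_top : X ^ (N + 1) *ᵥ u = 0)
    (h : ∀ m < N, X ^ (m + 1) *ᵥ u = 0 ∨ Xᵀ *ᵥ (X ^ (m + 1) *ᵥ v) = X ^ m *ᵥ v) :
    (∑ m ∈ range (N + 1), vecMulVec (X ^ m *ᵥ u) (X ^ m *ᵥ v)) * X -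
        X * ∑ m ∈ range (N + 1), vecMulVec (X ^ m *ᵥ u) (X ^ m *ᵥ v) =
      vecMulVec u (Xᵀ *ᵥ v) := by
  rw [sum_vecMulVec_pow_commutator, h_top, zero_vecMulVec, sub_zero, add_eq_left]
  refine sum_eq_zero fun m hm => ?_
  rcases h m (mem_range.1 hm) with h0 | h1
  · rw [h0, zero_vecMulVec]
  · rw [h1, sub_self, vecMulVec_zero]

theorem Matrix.pow_mul_single_mul_transpose_pow (X : Matrix ι ι R) (p q : ι) (m : ℕ) :
    X ^ m * single p q 1 * Xᵀ ^ m =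
      vecMulVec (X ^ m *ᵥ Pi.single p 1) (X ^ m *ᵥ Pi.single q 1) := by
  rw [single_eq_single_vecMulVec_single, mul_vecMulVec, ← transpose_pow, vecMulVec_mul,
    vecMul_transpose]

end CommutatorIdentity

section BaseFilling

variable {lam : List ℕ} {i j i' j' : ℕ}

theorem IsBox.of_le (hb : IsBox lam i j') (h : j ≤ j') : IsBox lam i j :=
  ⟨hb.1, h.trans_lt hb.2⟩

theorem sum_min_lt_baseLabel (hb : IsBox lam i j) :
    ∑ i' ∈ range lam.length, min (lam.getD i' 0) j < baseLabel lam i j := by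
  have hi : i ∈ (Ico i lam.length).filter (fun i' => j < lam.getD i' 0) := by
    simpa using ⟨hb.1, hb.2⟩
  have := card_pos.mpr ⟨i, hi⟩
  unfold baseLabel
  omega

theorem baseLabel_le_sum_min_succ (lam : List ℕ) (i j : ℕ) :
    baseLabel lam i j ≤ ∑ i' ∈ range lam.length, min (lam.getD i' 0) (j + 1) := by
  have h_rows : ((Ico i lam.length).filter (fun i' => j < lam.getD i' 0)).card ≤
      ∑ i' ∈ range lam.length, if j < lam.getD i' 0 then 1 else 0 := by
    rw [← card_filter]
    exact card_le_card (filter_subset_filter _ fun a ha => by simp_all)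
  have h_split : ∑ i' ∈ range lam.length, min (lam.getD i' 0) (j + 1) =
      ∑ i' ∈ range lam.length, min (lam.getD i' 0) j +
        ∑ i' ∈ range lam.length, if j < lam.getD i' 0 then 1 else 0 := by
    rw [← sum_add_distrib]
    exact sum_congr rfl fun i' _ => by split_ifs <;> omega
  unfold baseLabel
  omega

theorem baseLabel_lt_of_lt_col (hb' : IsBox lam i' j') (h : j < j') :
    baseLabel lam i j < baseLabel lam i' j' :=
  calc baseLabel lam i j ≤ ∑ i'' ∈ range lam.length, min (lam.getD i'' 0) (j + 1) :=
        baseLabel_le_sum_min_succ lam i j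
    _ ≤ ∑ i'' ∈ range lam.length, min (lam.getD i'' 0) j' :=
        sum_le_sum fun _ _ => by omega
    _ < baseLabel lam i' j' := sum_min_lt_baseLabel hb'

theorem baseLabel_lt_of_lt_row (hb : IsBox lam i j) (h : i < i') :
    baseLabel lam i' j < baseLabel lam i j := by
  unfold baseLabel
  gcongr
  refine ⟨filter_subset_filter _ (Ico_subset_Ico_left h.le), fun hsub => ?_⟩
  have := hsub (show i ∈ (Ico i lam.length).filter (fun i' => j < lam.getD i' 0) by
    simpa using ⟨hb.1, hb.2⟩)
  simp at this
  omega

theorem baseLabel_inj (hb : IsBox lam i j) (hb' : IsBox lam i' j')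
    (he : baseLabel lam i j = baseLabel lam i' j') : i = i' ∧ j = j' := by
  rcases lt_trichotomy j j' with hj | rfl | hj
  · exact absurd he (baseLabel_lt_of_lt_col hb' hj).ne
  · rcases lt_trichotomy i i' with hi | rfl | hi
    · exact absurd he (baseLabel_lt_of_lt_row hb hi).ne'
    · exact ⟨rfl, rfl⟩
    · exact absurd he (baseLabel_lt_of_lt_row hb' hi).ne
  · exact absurd he (baseLabel_lt_of_lt_col hb hj).ne'

theorem lt_baseLabel (hb : IsBox lam i j) : j < baseLabel lam i j := by
  induction j with
  | zero => exact (Nat.zero_le _).trans_lt (sum_min_lt_baseLabel hb)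
  | succ j ih =>
    have := baseLabel_lt_of_lt_col (i := i) hb j.lt_succ_self
    have := ih (hb.of_le j.le_succ)
    omega

theorem RightNbr.left_unique {a a' b : ℕ} (h : RightNbr lam a b) (h' : RightNbr lam a' b) :
    a = a' := by
  obtain ⟨i, j, hb, hla, hlb⟩ := h
  obtain ⟨i', j', hb', hla', hlb'⟩ := h'
  obtain ⟨rfl, hj⟩ := baseLabel_inj hb hb' (hlb.trans hlb'.symm)
  obtain rfl : j = j' := by omega
  omega

theorem RightNbr.right_unique {a b b' : ℕ} (h : RightNbr lam a b) (h' : RightNbr lam a b') :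
    b = b' := by
  obtain ⟨i, j, hb, hla, hlb⟩ := h
  obtain ⟨i', j', hb', hla', hlb'⟩ := h'
  obtain ⟨rfl, rfl⟩ := baseLabel_inj (hb.of_le j.le_succ) (hb'.of_le j'.le_succ)
    (hla.trans hla'.symm)
  omega

end BaseFilling

section Xlam

variable {n : ℕ} {lam : List ℕ} {i j : ℕ}

theorem Xlam_apply (a b : Fin n) :
    Xlam n lam a b = if RightNbr lam a b then 1 else 0 := rfl

theorem Xlam_mulVec_single {a b : Fin n} (h : RightNbr lam a b) :
    Xlam n lam *ᵥ Pi.single b 1 = Pi.single a 1 := by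
  ext y
  rw [mulVec_single_one, col_apply, Xlam_apply]
  by_cases hy : y = a
  · simp [hy, h]
  · rw [if_neg fun hy' => hy (Fin.ext (hy'.left_unique h)), Pi.single_eq_of_ne hy]

theorem Xlam_transpose_mulVec_single {a b : Fin n} (h : RightNbr lam a b) :
    (Xlam n lam)ᵀ *ᵥ Pi.single a 1 = Pi.single b 1 := by
  ext y
  rw [mulVec_single_one, col_apply, transpose_apply, Xlam_apply]
  by_cases hy : y = b
  · simp [hy, h]
  · rw [if_neg fun hy' => hy (Fin.ext (hy'.right_unique h)), Pi.single_eq_of_ne hy]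

theorem Xlam_mulVec_single_eq_zero {b : Fin n} (hb : IsBox lam i 0)
    (hl : baseLabel lam i 0 = b + 1) : Xlam n lam *ᵥ Pi.single b 1 = 0 := by
  ext y
  rw [mulVec_single_one, col_apply, Xlam_apply, if_neg, Pi.zero_apply]
  rintro ⟨i', j', hb', -, hlb⟩
  exact j'.succ_ne_zero (baseLabel_inj hb' hb (hlb.trans hl.symm)).2

theorem exists_rightNbr_of_isBox {b : Fin n} (hb : IsBox lam i (j + 1))
    (hl : baseLabel lam i (j + 1) = b + 1) :
    ∃ a : Fin n, baseLabel lam i j = a + 1 ∧ RightNbr lam a b := by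
  have hlt := baseLabel_lt_of_lt_col (i := i) hb j.lt_succ_self
  have hpos := lt_baseLabel (hb.of_le j.le_succ)
  refine ⟨⟨baseLabel lam i j - 1, by omega⟩, by simp only; omega, i, j, hb, by simp only; omega, hl⟩

theorem Xlam_pow_mulVec_single {b : Fin n} {m : ℕ} (hb : IsBox lam i (j + m))
    (hl : baseLabel lam i (j + m) = b + 1) :
    ∃ c : Fin n, baseLabel lam i j = c + 1 ∧ Xlam n lam ^ m *ᵥ Pi.single b 1 = Pi.single c 1 := by
  induction m generalizing b with
  | zero => exact ⟨b, hl, by rw [pow_zero, one_mulVec]⟩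
  | succ m ih =>
    obtain ⟨a, ha, hab⟩ := exists_rightNbr_of_isBox hb hl
    obtain ⟨c, hc, hXa⟩ := ih (hb.of_le (by omega)) ha
    exact ⟨c, hc, by rw [pow_succ, ← mulVec_mulVec, Xlam_mulVec_single hab, hXa]⟩

theorem Xlam_pow_mulVec_single_eq_zero {b : Fin n} {m : ℕ} (hb : IsBox lam i j)
    (hl : baseLabel lam i j = b + 1) (hm : j < m) : Xlam n lam ^ m *ᵥ Pi.single b 1 = 0 := by
  obtain ⟨d, rfl⟩ := Nat.exists_eq_add_of_lt hm
  obtain ⟨c, hc, hXb⟩ := Xlam_pow_mulVec_single (j := 0) (m := j)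
    (by rwa [zero_add]) (by rwa [zero_add])
  rw [show j + d + 1 = d + (j + 1) by omega, pow_add, ← mulVec_mulVec, pow_succ',
    ← mulVec_mulVec, hXb, Xlam_mulVec_single_eq_zero (hb.of_le (Nat.zero_le _)) hc,
    mulVec_zero]

theorem Xlam_transpose_mulVec_Xlam_pow_succ_mulVec_single {b : Fin n} {m : ℕ}
    (hb : IsBox lam i j) (hl : baseLabel lam i j = b + 1) (hm : m < j) :
    (Xlam n lam)ᵀ *ᵥ (Xlam n lam ^ (m + 1) *ᵥ Pi.single b 1) =
      Xlam n lam ^ m *ᵥ Pi.single b 1 := by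
  obtain ⟨d, rfl⟩ := Nat.exists_eq_add_of_lt hm
  obtain ⟨c, hc, hXb⟩ := Xlam_pow_mulVec_single (j := d + 1) (m := m)
    (by rwa [show d + 1 + m = m + d + 1 by omega]) (by rwa [show d + 1 + m = m + d + 1 by omega])
  obtain ⟨a, -, hac⟩ := exists_rightNbr_of_isBox (hb.of_le (by omega)) hc
  rw [pow_succ', ← mulVec_mulVec, hXb, Xlam_mulVec_single hac, Xlam_transpose_mulVec_single hac]

end Xlam

section Commutator

variable {n : ℕ} {lam : List ℕ}

theorem sum_Xlam_pow_mul_single_mul_transpose_pow_commutator {p q : Fin n} {ip jp iq jq : ℕ}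
    (hp : IsBox lam ip jp) (hlp : baseLabel lam ip jp = p + 1)
    (hq : IsBox lam iq jq) (hlq : baseLabel lam iq jq = q + 1) (hj : jp ≤ jq) :
    (∑ m ∈ range n, Xlam n lam ^ m * single p q 1 * (Xlam n lam)ᵀ ^ m) * Xlam n lam -
        Xlam n lam * ∑ m ∈ range n, Xlam n lam ^ m * single p q 1 * (Xlam n lam)ᵀ ^ m =
      single p q 1 * Xlam n lam := by
  obtain ⟨N, rfl⟩ : ∃ N, n = N + 1 := ⟨n - 1, by have := p.pos; omega⟩
  simp_rw [pow_mul_single_mul_transpose_pow]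
  rw [sum_vecMulVec_pow_commutator_eq, single_eq_single_vecMulVec_single, vecMulVec_mul,
    mulVec_transpose]
  · have := lt_baseLabel hp
    exact Xlam_pow_mulVec_single_eq_zero hp hlp (by omega)
  · intro m _
    by_cases hm : m < jq
    · exact Or.inr (Xlam_transpose_mulVec_Xlam_pow_succ_mulVec_single hq hlq hm)
    · exact Or.inl (Xlam_pow_mulVec_single_eq_zero hp hlp (by omega))

theorem BkMat_commutator (w : Equiv.Perm (Fin n)) (k : Fin n) (x : Fin n → ℂ) :
    BkMat n lam w k x * Xlam n lam - Xlam n lam * BkMat n lam w k x =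
      ∑ ℓ, if SpringerInvT n lam w k ℓ then x ℓ • (single (w k) (w ℓ) 1 * Xlam n lam) else 0 := by
  rw [BkMat, add_mul, mul_add, one_mul, mul_one, add_sub_add_left_eq_sub, sum_mul, mul_sum,
    ← sum_sub_distrib]
  refine sum_congr rfl fun ℓ _ => ?_
  split_ifs with hs
  · obtain ⟨-, ik, jk, il, jl, hbk, hbl, hlk, hll, hcol, -⟩ := hs
    rw [smul_mul_assoc, mul_smul_comm, ← smul_sub,
      sum_Xlam_pow_mul_single_mul_transpose_pow_commutator hbk hlk hbl hll (by omega)]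
  · rw [zero_mul, mul_zero, sub_zero]

theorem single_mul_Xlam_mulVec_single (p q b : Fin n) :
    (single p q 1 * Xlam n lam) *ᵥ Pi.single b 1 =
      if RightNbr lam q b then Pi.single p 1 else 0 := by
  rw [← mulVec_mulVec, mulVec_single_one, single_mulVec_eq, col_apply, Xlam_apply]
  split_ifs <;> simp

theorem BkMat_commutator_mulVec_single (w : Equiv.Perm (Fin n)) (k : Fin n) (x : Fin n → ℂ)
    (b : Fin n) :
    (BkMat n lam w k x * Xlam n lam - Xlam n lam * BkMat n lam w k x) *ᵥ Pi.single b 1 =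
      ∑ ℓ, if SpringerInvT n lam w k ℓ ∧ RightNbr lam (w ℓ) b
        then x ℓ • Pi.single (w k) 1 else 0 := by
  rw [BkMat_commutator, sum_mulVec]
  refine sum_congr rfl fun ℓ _ => ?_
  by_cases hs : SpringerInvT n lam w k ℓ
  · rw [if_pos hs, smul_mulVec, single_mul_Xlam_mulVec_single]
    split_ifs <;> simp_all
  · rw [if_neg hs, if_neg fun h => hs h.1, zero_mulVec]

theorem SpringerInvT.not_rightNbr_of_last {w : Equiv.Perm (Fin n)} {k ℓ : Fin n}
    (hs : SpringerInvT n lam w k ℓ) (hk : (k : ℕ) + 1 = n) (j : Fin n) :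
    ¬ RightNbr lam (w ℓ) (w j) := by
  obtain ⟨-, -, -, il, jl, -, hbl, -, hll, -, hright⟩ := hs
  rintro ⟨i, j', hb, hla, hlb⟩
  obtain ⟨rfl, rfl⟩ := baseLabel_inj hbl (hb.of_le j'.le_succ) (hll.trans hla.symm)
  have := hright j hb hlb.symm
  dsimp only at this
  omega

end Commutator

theorem stmt12_general (n : ℕ) (lam : List ℕ) (w : Equiv.Perm (Fin n)) (k : Fin n) (x : Fin n → ℂ) :
    (∀ j ℓ : Fin n, SpringerInvT n lam w k ℓ → RightNbr lam (w ℓ : ℕ) (w j : ℕ) →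
      (BkMat n lam w k x * Xlam n lam - Xlam n lam * BkMat n lam w k x).mulVec
          (Pi.single (w j) 1) =
        x ℓ • (Pi.single (w k) 1 : Fin n → ℂ)) ∧
    (∀ j : Fin n,
      (∀ ℓ : Fin n, SpringerInvT n lam w k ℓ → ¬ RightNbr lam (w ℓ : ℕ) (w j : ℕ)) →
      (BkMat n lam w k x * Xlam n lam - Xlam n lam * BkMat n lam w k x).mulVec
          (Pi.single (w j) 1) = 0) ∧
    ((k : ℕ) + 1 = n →
      BkMat n lam w k x * Xlam n lam = Xlam n lam * BkMat n lam w k x) := by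
  have h_off : ∀ j : Fin n,
      (∀ ℓ : Fin n, SpringerInvT n lam w k ℓ → ¬ RightNbr lam (w ℓ : ℕ) (w j : ℕ)) →
      (BkMat n lam w k x * Xlam n lam - Xlam n lam * BkMat n lam w k x).mulVec
          (Pi.single (w j) 1) = 0 := fun j hj => by
    rw [BkMat_commutator_mulVec_single]
    exact sum_eq_zero fun ℓ _ => if_neg fun h => hj ℓ h.1 h.2
  refine ⟨fun j ℓ hs hr => ?_, h_off, fun hk => ?_⟩
  · rw [BkMat_commutator_mulVec_single, sum_eq_single ℓ _ (by simp), if_pos ⟨hs, hr⟩]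
    rintro ℓ' - hne
    exact if_neg fun h => hne (w.injective (Fin.ext (h.2.left_unique hr)))
  · refine sub_eq_zero.1 (ext_of_mulVec_single fun b => ?_)
    rw [zero_mulVec, ← w.apply_symm_apply b]
    exact h_off _ fun ℓ hs => hs.not_rightNbr_of_last hk _

/-- the commutator `g_k X_λ - X_λ g_k` sends `e_{w(j)}` to `x ℓ • e_{w(k)}` if `j`
is the entry directly right of `ℓ` in `R(w)` for a Springer inversion `(k,ℓ)`, and to `0`
otherwise; in particular `g_n` commutes with `X_λ`. -/
theorem stmt12 (n : ℕ) (lam : List ℕ) (hn : lam.sum = n)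
    (w : Equiv.Perm (Fin n)) (hrs : RowStrictT n lam w)
    (k : Fin n) (hk : 1 ≤ (k : ℕ))
    (x : Fin n → ℂ) (hx : ∀ ℓ, ¬ SpringerInvT n lam w k ℓ → x ℓ = 0) :
    (∀ j ℓ : Fin n, SpringerInvT n lam w k ℓ → RightNbr lam (w ℓ : ℕ) (w j : ℕ) →
      (BkMat n lam w k x * Xlam n lam - Xlam n lam * BkMat n lam w k x).mulVec
          (Pi.single (w j) 1) =
        x ℓ • (Pi.single (w k) 1 : Fin n → ℂ)) ∧
    (∀ j : Fin n,
      (∀ ℓ : Fin n, SpringerInvT n lam w k ℓ → ¬ RightNbr lam (w ℓ : ℕ) (w j : ℕ)) →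
      (BkMat n lam w k x * Xlam n lam - Xlam n lam * BkMat n lam w k x).mulVec
          (Pi.single (w j) 1) = 0) ∧
    ((k : ℕ) + 1 = n →
      BkMat n lam w k x * Xlam n lam = Xlam n lam * BkMat n lam w k x) :=
  stmt12_general n lam w k x
end
end
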